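/- arXiv:1102.1639 — 2 statements merged into one kernel-verified Lean document; each statement's English description precedes it below -/
import Mathlib

section
/- Let V = ℝ^d with d ≥ 2 and let C be a compact connected subgroup of GL(d,ℝ) such that the only vector v ∈ V fixed by every element of C is v = 0. Let λ be a Borel probability measure on V that is invariant under every element of C (i.e., g_*λ = λ for all g ∈ C). If A is an affine subspace of V with λ(A) > 0, then A is a vector subspace of V (in particular 0 ∈ A). -/
/-!
Among the affine subspaces `B ≤ A` of positive measure choose a minimal one. By minimality and
invariance, each translate `g • B` either equals `B` or meets it in a null set, and all translates
have measure `λ B > 0`, so the orbit of `B` is finite. Its stabilizer is then a closed subgroup of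
finite index of the connected group `C`, hence all of `C`. Averaging a point of `B` over the Haar
measure of `C` gives a `C`-fixed point of `B`, which can only be `0`.
-/

open MeasureTheory Matrix MulAction
open scoped Pointwise

instance Matrix.continuousSMul_mulVec {n R : Type*} [Fintype n] [DecidableEq n] [Semiring R]
    [TopologicalSpace R] [IsTopologicalSemiring R] : ContinuousSMul (Matrix n n R) (n → R) :=
  ⟨continuous_fst.matrix_mulVec continuous_snd⟩

namespace AffineSubspace

variable {k V P : Type*} [DivisionRing k] [AddCommGroup V] [Module k V] [AddTorsor V P]

/-- Compare nonempty subspaces by direction and put the empty one below all others. -/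
instance wellFoundedLT [FiniteDimensional k V] : WellFoundedLT (AffineSubspace k P) := by
  classical
  let f : AffineSubspace k P → WithBot (Submodule k V) := fun s =>
    if (s : Set P).Nonempty then (s.direction : WithBot (Submodule k V)) else ⊥
  refine StrictMono.wellFoundedLT (f := f) fun s t hst => ?_
  by_cases hs : (s : Set P).Nonempty
  · have ht : (t : Set P).Nonempty := hs.mono hst.le
    simpa [f, hs, ht] using direction_lt_of_nonempty hst hs
  · have ht : (t : Set P).Nonempty := by
      rw [nonempty_iff_ne_bot]; exact ne_bot_of_gt hst
    simp [f, hs, ht]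

end AffineSubspace

section Topology

variable {G X : Type*} [Group G] [TopologicalSpace G] [TopologicalSpace X] [MulAction G X]
  [ContinuousSMul G X]

theorem isClosed_stabilizer_set [ContinuousInv G] {s : Set X} (hs : IsClosed s) :
    IsClosed (stabilizer G s : Set G) := by
  have : (stabilizer G s : Set G) =
      (⋂ x ∈ s, (· • x) ⁻¹' s) ∩ ⋂ x ∈ s, (fun g : G => g⁻¹ • x) ⁻¹' s := by
    ext g
    simp only [SetLike.mem_coe, mem_stabilizer_set, Set.mem_inter_iff, Set.mem_iInter,
      Set.mem_preimage]
    refine ⟨fun h => ⟨fun x hx => (h x).2 hx, fun x hx => ?_⟩,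
      fun ⟨h₁, h₂⟩ x => ⟨fun hx => ?_, h₁ x⟩⟩
    · rwa [← h, smul_inv_smul]
    · simpa using h₂ _ hx
  rw [this]
  exact (isClosed_biInter fun x _ => hs.preimage (continuous_id.smul continuous_const)).inter
    (isClosed_biInter fun x _ => hs.preimage (continuous_inv.smul continuous_const))

/-- A closed subgroup of finite index is open, hence everything in a connected group. -/
theorem stabilizer_eq_top_of_finite_orbit [IsTopologicalGroup G] [ConnectedSpace G]
    {s : Set X} (hs : IsClosed s) (hfin : (orbit G s).Finite) : stabilizer G s = ⊤ := by
  have : (stabilizer G s).FiniteIndex := ⟨by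
    rw [index_stabilizer]; exact Set.ncard_ne_zero_of_mem (mem_orbit_self s) hfin⟩
  have hclosed := isClosed_stabilizer_set (G := G) hs
  have hclopen : IsClopen (stabilizer G s : Set G) :=
    ⟨hclosed, (stabilizer G s).isOpen_of_isClosed_of_finiteIndex hclosed⟩
  exact SetLike.coe_injective (hclopen.eq_univ ⟨1, one_mem _⟩)

end Topology

section Measure

variable {G α : Type*} [Group G] [MulAction G α] [MeasurableSpace α] {μ : Measure α}
  [SMulInvariantMeasure G α μ] {s : Set α}

theorem measure_smul_inter_smul_eq_zero (h : ∀ g : G, g • s ≠ s → μ (g • s ∩ s) = 0)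
    {g₁ g₂ : G} (hne : g₁ • s ≠ g₂ • s) : μ (g₁ • s ∩ g₂ • s) = 0 := by
  have hne' : (g₂⁻¹ * g₁) • s ≠ s := by
    rwa [mul_smul, Ne, inv_smul_eq_iff]
  rw [← measure_smul μ g₂⁻¹, Set.smul_set_inter, inv_smul_smul, ← mul_smul]
  exact h _ hne'

/-- Translates of `s` are pairwise almost disjoint and all have measure `μ s > 0`, so only
finitely many of them fit in a finite measure. -/
theorem finite_orbit_of_measure_smul_inter_eq_zero [IsFiniteMeasure μ] [MeasurableConstSMul G α]
    (hs : MeasurableSet s) (hμs : μ s ≠ 0) (h : ∀ g : G, g • s ≠ s → μ (g • s ∩ s) = 0) :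
    (orbit G s).Finite := by
  have hmeas (t : orbit G s) : NullMeasurableSet (t : Set α) μ := by
    obtain ⟨_, g, rfl⟩ := t
    exact (hs.const_smul g).nullMeasurableSet
  have hpair : Pairwise fun t t' : orbit G s => AEDisjoint μ t t' := by
    rintro ⟨_, g₁, rfl⟩ ⟨_, g₂, rfl⟩ hne
    exact measure_smul_inter_smul_eq_zero h fun heq => hne (Subtype.ext heq)
  have hfin := Measure.finite_const_le_meas_of_disjoint_iUnion₀ μ (pos_iff_ne_zero.2 hμs)
    hmeas hpair (measure_ne_top μ _)
  have huniv : {t : orbit G s | μ s ≤ μ t} = Set.univ := by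
    ext ⟨_, g, rfl⟩
    simp [measure_smul]
  rw [huniv, Set.finite_univ_iff] at hfin
  exact Set.toFinite _

end Measure

section Averaging

variable {G V : Type*} [Group G] [TopologicalSpace G] [IsTopologicalGroup G] [CompactSpace G]
  [NormedAddCommGroup V] [NormedSpace ℝ V] [CompleteSpace V] [DistribMulAction G V]
  [SMulCommClass G ℝ V] [ContinuousSMul G V]

/-- The Haar average of the orbit of a point of `s` lies in `s` and is fixed by `G`. -/
theorem exists_mem_fixedPoints_of_convex {s : Set V} (hconv : Convex ℝ s) (hclosed : IsClosed s)
    (hne : s.Nonempty) (hs : ∀ g : G, ∀ x ∈ s, g • x ∈ s) : (s ∩ fixedPoints G V).Nonempty := by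
  obtain ⟨a, ha⟩ := hne
  borelize G
  let ν : Measure G := Measure.haarMeasure ⊤
  have : IsProbabilityMeasure ν :=
    ⟨by simpa using Measure.haarMeasure_self (K₀ := (⊤ : TopologicalSpace.PositiveCompacts G))⟩
  let F : G → V := fun g => g • a
  have hF : Continuous F := continuous_id.smul continuous_const
  have hFi : Integrable F ν := hF.integrable_of_hasCompactSupport (.of_compactSpace _)
  refine ⟨∫ g, F g ∂ν, hconv.integral_mem hclosed (.of_forall fun g => hs g a ha) hFi,
    fun h => ?_⟩
  let L : V →L[ℝ] V := ⟨DistribSMul.toLinearMap ℝ V h, continuous_const_smul h⟩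
  calc h • ∫ g, F g ∂ν = ∫ g, L (F g) ∂ν := (L.integral_comp_comm hFi).symm
    _ = ∫ g, F (h * g) ∂ν := by simp only [F, mul_smul]; rfl
    _ = ∫ g, F g ∂ν := integral_mul_left_eq_self F h

end Averaging

namespace AffineSubspace

variable {k G V : Type*} [Ring k] [Group G] [AddCommGroup V] [Module k V] [DistribMulAction G V]
  [SMulCommClass G k V] [MeasurableSpace V] {μ : Measure V} [SMulInvariantMeasure G V μ]

/-- Minimality applied to `g • B ⊓ B` and to `g⁻¹ • B ⊓ B`, which have the same measure by
invariance, gives `B ≤ g • B` and `B ≤ g⁻¹ • B`. -/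
theorem smul_eq_of_minimal_measure_pos {B : AffineSubspace k V}
    (hB : Minimal (fun B : AffineSubspace k V => 0 < μ B) B) {g : G}
    (hg : 0 < μ (g • (B : Set V) ∩ B)) : g • B = B := by
  have le_smul : ∀ g : G, 0 < μ (g • (B : Set V) ∩ B) → B ≤ g • B := fun g hg =>
    (hB.2 (y := g • B ⊓ B) hg inf_le_right).trans inf_le_left
  have hg' : 0 < μ (g⁻¹ • (B : Set V) ∩ B) := by
    rwa [← measure_smul μ g, Set.smul_set_inter, smul_inv_smul, Set.inter_comm]
  refine le_antisymm ?_ (le_smul g hg)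
  have := Set.smul_set_mono (a := g) (SetLike.coe_subset_coe.2 (le_smul g⁻¹ hg'))
  rwa [coe_smul, smul_inv_smul, ← coe_smul, SetLike.coe_subset_coe] at this

end AffineSubspace

theorem AffineSubspace.zero_mem_of_measure_pos {G V : Type*} [Group G] [TopologicalSpace G]
    [IsTopologicalGroup G] [CompactSpace G] [ConnectedSpace G] [NormedAddCommGroup V]
    [NormedSpace ℝ V] [FiniteDimensional ℝ V] [MeasurableSpace V] [BorelSpace V]
    [DistribMulAction G V] [SMulCommClass G ℝ V] [ContinuousSMul G V]
    (hfix : ∀ v : V, (∀ g : G, g • v = v) → v = 0) (μ : Measure V) [IsFiniteMeasure μ]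
    [SMulInvariantMeasure G V μ] {A : AffineSubspace ℝ V} (hA : 0 < μ A) : (0 : V) ∈ A := by
  obtain ⟨B, hBA, hB⟩ :=
    exists_minimal_le_of_wellFoundedLT (fun B : AffineSubspace ℝ V => 0 < μ B) A hA
  have hBclosed : IsClosed (B : Set V) := B.closed_of_finiteDimensional
  have hfin : (orbit G (B : Set V)).Finite :=
    finite_orbit_of_measure_smul_inter_eq_zero hBclosed.measurableSet hB.prop.ne' fun g hg => by
      by_contra h
      exact hg (congrArg SetLike.coe (smul_eq_of_minimal_measure_pos hB (pos_iff_ne_zero.2 h)))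
  have hstab := stabilizer_eq_top_of_finite_orbit hBclosed hfin
  obtain ⟨v, hvB, hv⟩ := exists_mem_fixedPoints_of_convex B.convex hBclosed
    (nonempty_of_measure_ne_zero hB.prop.ne') fun g x hx => by
      have hg : g ∈ stabilizer G (B : Set V) := hstab ▸ Subgroup.mem_top g
      exact mem_stabilizer_iff.1 hg ▸ Set.smul_mem_smul_set hx
  rw [hfix v hv] at hvB
  exact hBA hvB

theorem stmt0_general (d : ℕ)
    (C : Subgroup (GL (Fin d) ℝ))
    (hCcompact : IsCompact (C : Set (GL (Fin d) ℝ)))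
    (hCconn : IsConnected (C : Set (GL (Fin d) ℝ)))
    (hfix : ∀ v : Fin d → ℝ,
      (∀ g ∈ C, Matrix.mulVec (g : Matrix (Fin d) (Fin d) ℝ) v = v) → v = 0)
    (lam : Measure (Fin d → ℝ)) [IsProbabilityMeasure lam]
    (hinv : ∀ g ∈ C,
      lam.map (fun v => Matrix.mulVec (g : Matrix (Fin d) (Fin d) ℝ) v) = lam)
    (A : AffineSubspace ℝ (Fin d → ℝ)) (hA : 0 < lam (A : Set (Fin d → ℝ))) :
    (0 : Fin d → ℝ) ∈ A ∧ ∃ W : Submodule ℝ (Fin d → ℝ), (A : Set (Fin d → ℝ)) = W := by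
  have : CompactSpace C := isCompact_iff_compactSpace.mp hCcompact
  have : ConnectedSpace C := isConnected_iff_connectedSpace.mp hCconn
  have : SMulInvariantMeasure C (Fin d → ℝ) lam := ⟨fun g s hs => by
    rw [← Measure.map_apply (continuous_const_smul g).measurable hs]
    exact congrArg (· s) (hinv g g.2)⟩
  have h0 : (0 : Fin d → ℝ) ∈ A :=
    A.zero_mem_of_measure_pos (G := C) (fun v hv => hfix v fun g hg => hv ⟨g, hg⟩) lam hA
  exact ⟨h0, A.direction, congrArg SetLike.coe (A.direction_eq_self_iff_zero_mem.mpr h0).symm⟩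

/-- Let `V = ℝ^d`, `d ≥ 2`, and `C` a compact connected subgroup of
`GL(d,ℝ)` whose action on `V` has no nonzero fixed point.  If `lam` is a `C`-invariant
Borel probability measure on `V` and `A` is an affine subspace with `lam A > 0`, then
`A` is a vector subspace (in particular `0 ∈ A`). -/
theorem stmt0 (d : ℕ) (hd : 2 ≤ d)
    (C : Subgroup (GL (Fin d) ℝ))
    (hCcompact : IsCompact (C : Set (GL (Fin d) ℝ)))
    (hCconn : IsConnected (C : Set (GL (Fin d) ℝ)))
    (hfix : ∀ v : Fin d → ℝ,
      (∀ g ∈ C, Matrix.mulVec (g : Matrix (Fin d) (Fin d) ℝ) v = v) → v = 0)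
    (lam : Measure (Fin d → ℝ)) [IsProbabilityMeasure lam]
    (hinv : ∀ g ∈ C,
      lam.map (fun v => Matrix.mulVec (g : Matrix (Fin d) (Fin d) ℝ) v) = lam)
    (A : AffineSubspace ℝ (Fin d → ℝ)) (hA : 0 < lam (A : Set (Fin d → ℝ))) :
    (0 : Fin d → ℝ) ∈ A ∧ ∃ W : Submodule ℝ (Fin d → ℝ), (A : Set (Fin d → ℝ)) = W :=
  stmt0_general d C hCcompact hCconn hfix lam hinv A hA
end

section
/- Let d ≥ 2. Every Borel probability measure λ on ℝ^d admits a pure decomposition, and it is unique: if (λ_i)_{i∈I} and (κ_j)_{j∈J} are two pure decompositions of λ, then there is a bijection φ : I → J with κ_{φ(i)} = λ_i for all i ∈ I. -/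
open MeasureTheory

/-- The (topological) support of a measure: points all of whose open neighbourhoods
have positive measure. -/
def msupp {X : Type*} [TopologicalSpace X] [MeasurableSpace X] (μ : Measure X) : Set X :=
  {x | ∀ U : Set X, IsOpen U → x ∈ U → 0 < μ U}

/-- A nonzero finite Borel measure on `ℝ^d` is *pure* if every vector subspace of
positive measure contains the linear span of its support. -/
def IsPure {d : ℕ} (μ : Measure (Fin d → ℝ)) : Prop :=
  μ ≠ 0 ∧ IsFiniteMeasure μ ∧
    ∀ W : Submodule ℝ (Fin d → ℝ), 0 < μ (W : Set (Fin d → ℝ)) →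
      Submodule.span ℝ (msupp μ) ≤ W

/-- A *pure decomposition* of a finite Borel measure `μ` on `ℝ^d`: a countable family of
nonzero pure finite measures, the linear spans of whose supports are pairwise distinct,
summing to `μ`. -/
def IsPureDecomp {d : ℕ} {ι : Type*} (μ : Measure (Fin d → ℝ))
    (f : ι → Measure (Fin d → ℝ)) : Prop :=
  Countable ι ∧ (∀ i, IsPure (f i)) ∧
    (∀ i j : ι, i ≠ j →
      Submodule.span ℝ (msupp (f i)) ≠ Submodule.span ℝ (msupp (f j))) ∧
    μ = Measure.sum f

/-!
For every subspace `W` choose countably many proper subspaces of `W` which almost cover every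
proper subspace of `W` of positive measure, and let `N(W)` (`newPart J W`) be `W` minus their
union. Two sets `N(W)`, `N(W')` meet only inside a proper subspace of one of them, so they are
almost disjoint; hence only countably many have positive measure, and an induction on dimension
shows that these almost cover the space. The restrictions `λ|N(W)` are pure with support spanning
`W`, so they form a pure decomposition. Conversely, a pure component `κ ≤ λ` whose support spans
`W` lives on `N(W)` and gives no mass to `N(W')` for `W' ≠ W`, so `κ = λ|N(W)`: every pure
decomposition is this one.
-/

open Set
open scoped ENNReal

lemma exists_countable_ae_cover {X ι : Type*} [MeasurableSpace X] (μ : Measure X)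
    [IsFiniteMeasure μ] (V : ι → Set X) (hV : ∀ i, MeasurableSet (V i)) :
    ∃ J : Set ι, J.Countable ∧ ∀ i, μ (V i \ ⋃ j ∈ J, V j) = 0 := by
  let F : {J : Set ι // J.Countable} → ℝ≥0∞ := fun J => μ (⋃ j ∈ J.1, V j)
  obtain ⟨u, -, hu, hu_mem⟩ :=
    exists_seq_tendsto_sSup ⟨F ⟨∅, countable_empty⟩, mem_range_self _⟩ (OrderTop.bddAbove _)
  choose Js hJs using hu_mem
  let J : Set ι := ⋃ n, (Js n).1
  have hJ : J.Countable := countable_iUnion fun n => (Js n).2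
  -- `J` attains the supremum of `F`, so adding one more index cannot increase the measure.
  have hmax : ∀ K, F K ≤ μ (⋃ j ∈ J, V j) := fun K =>
    (le_sSup (mem_range_self K)).trans <| le_of_tendsto' hu fun n => hJs n ▸
      measure_mono (biUnion_subset_biUnion_left (subset_iUnion (fun n => (Js n).1) n))
  refine ⟨J, hJ, fun i => ?_⟩
  have hU : MeasurableSet (⋃ j ∈ J, V j) := .biUnion hJ fun j _ => hV j
  have hi : μ (⋃ j ∈ insert i J, V j) ≤ μ (⋃ j ∈ J, V j) := hmax ⟨_, hJ.insert i⟩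
  rw [biUnion_insert, union_comm, ← union_sdiff_self,
    measure_union disjoint_sdiff_right ((hV i).diff hU)] at hi
  exact nonpos_iff_eq_zero.mp <|
    ENNReal.le_of_add_le_add_left (measure_ne_top μ _) (by rwa [add_zero])

section SubspaceCover

variable {E : Type*} [AddCommGroup E] [Module ℝ E]

def lowerUnion (J : Submodule ℝ E → Set (Submodule ℝ E)) (W : Submodule ℝ E) : Set E :=
  ⋃ V ∈ J W, (V : Set E)

def newPart (J : Submodule ℝ E → Set (Submodule ℝ E)) (W : Submodule ℝ E) : Set E :=
  (W : Set E) \ lowerUnion J W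

variable [MeasurableSpace E]

structure IsSubspaceCover (μ : Measure E) (J : Submodule ℝ E → Set (Submodule ℝ E)) : Prop where
  countable : ∀ W, (J W).Countable
  lt : ∀ W, ∀ V ∈ J W, V < W
  measure_diff_lowerUnion :
    ∀ W V : Submodule ℝ E, V < W → 0 < μ V → μ (V \ lowerUnion J W) = 0

def essentialSubspaces (μ : Measure E) (J : Submodule ℝ E → Set (Submodule ℝ E)) :
    Set (Submodule ℝ E) :=
  {W | 0 < μ (newPart J W)}

variable {μ : Measure E} {J : Submodule ℝ E → Set (Submodule ℝ E)}

namespace IsSubspaceCover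

variable (hJ : IsSubspaceCover μ J)
include hJ

lemma le_of_subset_newPart {W V : Submodule ℝ E} {s : Set E} (hsW : s ⊆ newPart J W)
    (hsV : s ⊆ V) (hs : 0 < μ s) : W ≤ V := by
  by_contra hWV
  have hlt : V ⊓ W < W := inf_le_right.lt_of_ne fun h => hWV (h ▸ inf_le_left)
  have hsub : s ⊆ ((V ⊓ W : Submodule ℝ E) : Set E) \ lowerUnion J W := fun x hx =>
    ⟨⟨hsV hx, (hsW hx).1⟩, (hsW hx).2⟩
  have hpos := hs.trans_le (measure_mono hsub)
  exact hpos.ne' <| hJ.measure_diff_lowerUnion W _ hlt (hpos.trans_le (measure_mono sdiff_subset))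

lemma aedisjoint_newPart {W W' : Submodule ℝ E} (hne : W ≠ W') :
    AEDisjoint μ (newPart J W) (newPart J W') := by
  by_contra h
  have hpos := pos_iff_ne_zero.mpr h
  exact hne <| le_antisymm
    (hJ.le_of_subset_newPart inter_subset_left (inter_subset_right.trans sdiff_subset) hpos)
    (hJ.le_of_subset_newPart inter_subset_right (inter_subset_left.trans sdiff_subset) hpos)

lemma measure_compl_iUnion_newPart [FiniteDimensional ℝ E] :
    μ (⋃ W ∈ essentialSubspaces μ J, newPart J W)ᶜ = 0 := by
  set T := ⋃ W ∈ essentialSubspaces μ J, newPart J W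
  suffices h : ∀ W : Submodule ℝ E, μ ((W : Set E) \ T) = 0 by
    simpa only [Submodule.top_coe, compl_eq_univ_sdiff] using h ⊤
  intro W
  induction W using WellFoundedLT.induction with
  | _ W ih =>
    have hcover : (W : Set E) \ T ⊆ (newPart J W \ T) ∪ ⋃ V ∈ J W, ((V : Set E) \ T) := by
      rintro x ⟨hxW, hxT⟩
      by_cases hxU : x ∈ lowerUnion J W
      · obtain ⟨V, hV, hxV⟩ := mem_iUnion₂.mp hxU
        exact Or.inr (mem_biUnion hV ⟨hxV, hxT⟩)
      · exact Or.inl ⟨⟨hxW, hxU⟩, hxT⟩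
    have hnew : μ (newPart J W \ T) = 0 := by
      by_cases hW : W ∈ essentialSubspaces μ J
      · rw [sdiff_eq_empty.mpr (subset_biUnion_of_mem (u := newPart J) hW), measure_empty]
      · exact measure_mono_null sdiff_subset (nonpos_iff_eq_zero.mp (not_lt.mp hW))
    have hlower : μ (⋃ V ∈ J W, ((V : Set E) \ T)) = 0 :=
      (measure_biUnion_null_iff (hJ.countable W)).mpr fun V hV => ih V (hJ.lt W V hV)
    exact measure_mono_null hcover (measure_union_null hnew hlower)

end IsSubspaceCover

section Topology

variable [TopologicalSpace E] [IsTopologicalAddGroup E] [ContinuousSMul ℝ E] [T2Space E]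
  [FiniteDimensional ℝ E] [OpensMeasurableSpace E]

lemma exists_isSubspaceCover (μ : Measure E) [IsFiniteMeasure μ] :
    ∃ J : Submodule ℝ E → Set (Submodule ℝ E), IsSubspaceCover μ J := by
  have hcover : ∀ W : Submodule ℝ E, ∃ JW : Set (Submodule ℝ E), JW.Countable ∧
      (∀ V ∈ JW, V < W) ∧ ∀ V : Submodule ℝ E, V < W → 0 < μ V →
        μ ((V : Set E) \ ⋃ V' ∈ JW, (V' : Set E)) = 0 := by
    intro W
    obtain ⟨J₀, hJ₀, hcov⟩ := exists_countable_ae_cover μ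
      (fun V : {V : Submodule ℝ E // V < W ∧ 0 < μ V} => (V.1 : Set E))
      fun V => V.1.closed_of_finiteDimensional.measurableSet
    refine ⟨Subtype.val '' J₀, hJ₀.image _, fun V ⟨V', _, hV'⟩ => hV' ▸ V'.2.1,
      fun V hVW hV => ?_⟩
    rw [biUnion_image]
    exact hcov ⟨V, hVW, hV⟩
  choose J hJc hJlt hJcov using hcover
  exact ⟨J, hJc, hJlt, hJcov⟩

namespace IsSubspaceCover

variable (hJ : IsSubspaceCover μ J)
include hJ

lemma measurableSet_newPart (W : Submodule ℝ E) : MeasurableSet (newPart J W) :=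
  W.closed_of_finiteDimensional.measurableSet.diff <|
    .biUnion (hJ.countable W) fun V _ => V.closed_of_finiteDimensional.measurableSet

lemma countable_essentialSubspaces [SFinite μ] : (essentialSubspaces μ J).Countable :=
  Measure.countable_meas_pos_of_disjoint_iUnion₀
    (fun W => (hJ.measurableSet_newPart W).nullMeasurableSet)
    fun _ _ h => hJ.aedisjoint_newPart h

lemma sum_restrict_newPart [SFinite μ] :
    Measure.sum (fun W : essentialSubspaces μ J => μ.restrict (newPart J W)) = μ := by
  have := hJ.countable_essentialSubspaces.to_subtype
  rw [← Measure.restrict_iUnion_ae (fun W W' h => hJ.aedisjoint_newPart (Subtype.coe_ne_coe.mpr h))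
    fun W => (hJ.measurableSet_newPart W).nullMeasurableSet]
  exact Measure.restrict_eq_self_of_ae_mem <| mem_ae_iff.mpr <| by
    simpa only [biUnion_eq_iUnion, ofPred_mem_eq] using hJ.measure_compl_iUnion_newPart

end IsSubspaceCover

end Topology

end SubspaceCover

lemma msupp_eq_support {X : Type*} [TopologicalSpace X] [MeasurableSpace X] (μ : Measure X) :
    msupp μ = μ.support := by
  ext x
  simp only [msupp, Measure.support_eq_forall_isOpen, mem_ofPred_eq]
  exact forall_congr' fun U => Imp.swap

section Span

variable {E : Type*} [NormedAddCommGroup E] [NormedSpace ℝ E] [FiniteDimensional ℝ E]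
  [MeasurableSpace E] (μ : Measure E)

lemma measure_compl_span_msupp : μ (Submodule.span ℝ (msupp μ) : Set E)ᶜ = 0 :=
  measure_mono_null (compl_subset_compl.mpr Submodule.subset_span)
    (msupp_eq_support μ ▸ μ.measure_compl_support)

lemma measure_span_msupp_pos (hμ : μ ≠ 0) : 0 < μ (Submodule.span ℝ (msupp μ)) := by
  refine pos_iff_ne_zero.mpr fun h => hμ (Measure.measure_univ_eq_zero.mp ?_)
  rw [← union_compl_self (Submodule.span ℝ (msupp μ) : Set E)]
  exact measure_union_null h (measure_compl_span_msupp μ)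

lemma span_msupp_le_of_measure_compl_eq_zero {W : Submodule ℝ E} (hW : μ (W : Set E)ᶜ = 0) :
    Submodule.span ℝ (msupp μ) ≤ W :=
  Submodule.span_le.mpr <| msupp_eq_support μ ▸
    Measure.support_subset_of_isClosed W.closed_of_finiteDimensional hW

end Span

section Pure

variable {d : ℕ} {lam : Measure (Fin d → ℝ)}
  {J : Submodule ℝ (Fin d → ℝ) → Set (Submodule ℝ (Fin d → ℝ))}

namespace IsSubspaceCover

variable (hJ : IsSubspaceCover lam J)
include hJ

lemma span_msupp_restrict_newPart {W : Submodule ℝ (Fin d → ℝ)}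
    (hW : W ∈ essentialSubspaces lam J) :
    Submodule.span ℝ (msupp (lam.restrict (newPart J W))) = W := by
  have hA := hJ.measurableSet_newPart W
  refine le_antisymm (span_msupp_le_of_measure_compl_eq_zero _ ?_) ?_
  · rw [Measure.restrict_apply' hA]
    exact measure_mono_null (fun x hx => hx.1 hx.2.1) measure_empty
  · have hpos := measure_span_msupp_pos _ (Measure.restrict_eq_zero.not.mpr hW.ne')
    rw [Measure.restrict_apply' hA] at hpos
    exact hJ.le_of_subset_newPart inter_subset_right inter_subset_left hpos

lemma isPure_restrict_newPart [IsFiniteMeasure lam] {W : Submodule ℝ (Fin d → ℝ)}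
    (hW : W ∈ essentialSubspaces lam J) : IsPure (lam.restrict (newPart J W)) := by
  refine ⟨Measure.restrict_eq_zero.not.mpr hW.ne', inferInstance, fun V hV => ?_⟩
  rw [hJ.span_msupp_restrict_newPart hW]
  rw [Measure.restrict_apply' (hJ.measurableSet_newPart W)] at hV
  exact hJ.le_of_subset_newPart inter_subset_right inter_subset_left hV

lemma isPureDecomp_restrict_newPart [IsFiniteMeasure lam] :
    IsPureDecomp lam fun W : essentialSubspaces lam J => lam.restrict (newPart J W) := by
  refine ⟨hJ.countable_essentialSubspaces.to_subtype, fun W => hJ.isPure_restrict_newPart W.2,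
    fun W W' h => ?_, hJ.sum_restrict_newPart.symm⟩
  rwa [hJ.span_msupp_restrict_newPart W.2, hJ.span_msupp_restrict_newPart W'.2,
    Subtype.coe_ne_coe]

end IsSubspaceCover

namespace IsPure

variable {μ : Measure (Fin d → ℝ)} (hμ : IsPure μ)
include hμ

lemma measure_eq_zero_of_not_le {V : Submodule ℝ (Fin d → ℝ)}
    (h : ¬ Submodule.span ℝ (msupp μ) ≤ V) : μ V = 0 :=
  nonpos_iff_eq_zero.mp (not_lt.mp (mt (hμ.2.2 V) h))

lemma measure_compl_newPart_span_msupp (hJc : ∀ W, (J W).Countable)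
    (hJlt : ∀ W, ∀ V ∈ J W, V < W) : μ (newPart J (Submodule.span ℝ (msupp μ)))ᶜ = 0 := by
  set U := Submodule.span ℝ (msupp μ)
  have hlower : μ (lowerUnion J U) = 0 := (measure_biUnion_null_iff (hJc U)).mpr
    fun V hV => hμ.measure_eq_zero_of_not_le (hJlt U V hV).not_ge
  rw [newPart, compl_sdiff]
  exact measure_union_null hlower (measure_compl_span_msupp μ)

lemma measure_newPart_eq_zero (hle : μ ≤ lam) (hJ : IsSubspaceCover lam J)
    {W : Submodule ℝ (Fin d → ℝ)} (hW : Submodule.span ℝ (msupp μ) ≠ W) :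
    μ (newPart J W) = 0 := by
  set U := Submodule.span ℝ (msupp μ)
  by_contra h
  have hpos := pos_iff_ne_zero.mpr h
  have hUW : U ≤ W := hμ.2.2 W (hpos.trans_le (measure_mono sdiff_subset))
  rw [← measure_inter_conull (measure_compl_span_msupp μ)] at hpos
  exact hW <| le_antisymm hUW <|
    hJ.le_of_subset_newPart inter_subset_left inter_subset_right (hpos.trans_le (hle _))

end IsPure

namespace IsPureDecomp

variable {ι : Type*} {f : ι → Measure (Fin d → ℝ)} (hf : IsPureDecomp lam f)
include hf

lemma le (i : ι) : f i ≤ lam :=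
  hf.2.2.2 ▸ Measure.le_sum f i

variable (hJ : IsSubspaceCover lam J)
include hJ

lemma measure_newPart_eq_zero {i : ι} {W : Submodule ℝ (Fin d → ℝ)}
    (hW : Submodule.span ℝ (msupp (f i)) ≠ W) : f i (newPart J W) = 0 :=
  (hf.2.1 i).measure_newPart_eq_zero (hf.le i) hJ hW

lemma eq_restrict_newPart (i : ι) :
    f i = lam.restrict (newPart J (Submodule.span ℝ (msupp (f i)))) := by
  have ⟨_, hpure, hdistinct, hsum⟩ := hf
  ext s hs
  rw [Measure.restrict_apply hs, hsum,
    Measure.sum_apply _ (hs.inter (hJ.measurableSet_newPart _)),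
    tsum_eq_single i fun j hj => measure_mono_null inter_subset_right
      (hf.measure_newPart_eq_zero hJ (hdistinct j i hj)),
    measure_inter_conull ((hpure i).measure_compl_newPart_span_msupp hJ.countable hJ.lt)]

lemma span_msupp_mem_essentialSubspaces (i : ι) :
    Submodule.span ℝ (msupp (f i)) ∈ essentialSubspaces lam J := by
  have hpure := hf.2.1 i
  refine (Measure.measure_univ_pos.mpr hpure.1).trans_le ?_
  rw [← measure_inter_conull (hpure.measure_compl_newPart_span_msupp hJ.countable hJ.lt),
    univ_inter]
  exact hf.le i _

lemma exists_span_msupp_eq {W : Submodule ℝ (Fin d → ℝ)} (hW : W ∈ essentialSubspaces lam J) :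
    ∃ i, Submodule.span ℝ (msupp (f i)) = W := by
  by_contra! h
  refine (show 0 < lam (newPart J W) from hW).ne' ?_
  rw [hf.2.2.2, Measure.sum_apply _ (hJ.measurableSet_newPart W), ENNReal.tsum_eq_zero]
  exact fun i => hf.measure_newPart_eq_zero hJ (h i)

lemma bijective_span_msupp :
    Function.Bijective fun i => (⟨Submodule.span ℝ (msupp (f i)),
      hf.span_msupp_mem_essentialSubspaces hJ i⟩ : essentialSubspaces lam J) :=
  ⟨fun i j h => by_contra fun hij => hf.2.2.1 i j hij (congrArg Subtype.val h),
    fun W => (hf.exists_span_msupp_eq hJ W.2).imp fun _ hi => Subtype.ext hi⟩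

end IsPureDecomp

end Pure

theorem stmt3_general (d : ℕ) (lam : Measure (Fin d → ℝ)) [IsProbabilityMeasure lam] :
    (∃ (ι : Type) (f : ι → Measure (Fin d → ℝ)), IsPureDecomp lam f) ∧
    (∀ (ι κ : Type) (f : ι → Measure (Fin d → ℝ)) (g : κ → Measure (Fin d → ℝ)),
      IsPureDecomp lam f → IsPureDecomp lam g →
      ∃ φ : ι ≃ κ, ∀ i : ι, g (φ i) = f i) := by
  obtain ⟨J, hJ⟩ := exists_isSubspaceCover lam
  refine ⟨⟨_, _, hJ.isPureDecomp_restrict_newPart⟩, fun ι κ f g hf hg => ?_⟩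
  let ef := Equiv.ofBijective _ (hf.bijective_span_msupp hJ)
  let eg := Equiv.ofBijective _ (hg.bijective_span_msupp hJ)
  refine ⟨ef.trans eg.symm, fun i => ?_⟩
  have hspan : Submodule.span ℝ (msupp (g (eg.symm (ef i)))) = Submodule.span ℝ (msupp (f i)) :=
    congrArg Subtype.val (eg.apply_symm_apply (ef i))
  rw [Equiv.trans_apply, hg.eq_restrict_newPart hJ, hspan, ← hf.eq_restrict_newPart hJ]

/-- For `d ≥ 2`, every Borel probability measure on `ℝ^d` admits a pure
decomposition, unique up to a bijection of the index sets. -/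
theorem stmt3 (d : ℕ) (hd : 2 ≤ d)
    (lam : Measure (Fin d → ℝ)) [IsProbabilityMeasure lam] :
    (∃ (ι : Type) (f : ι → Measure (Fin d → ℝ)), IsPureDecomp lam f) ∧
    (∀ (ι κ : Type) (f : ι → Measure (Fin d → ℝ)) (g : κ → Measure (Fin d → ℝ)),
      IsPureDecomp lam f → IsPureDecomp lam g →
      ∃ φ : ι ≃ κ, ∀ i : ι, g (φ i) = f i) :=
  stmt3_general d lam
end
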